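/- In d dimensions, the minimum number of hyperplanes needed to intersect every cell of the n × n × ... × n box Q_n^d equals ⌈n/2⌉. -/
import Mathlib


open scoped Classical

/-- The closed cell of `Q_n^d` indexed by `k : Fin d → ℕ` with `k i ∈ {1,…,n}`. -/
def cellD (d n : ℕ) (k : Fin d → ℕ) : Set (Fin d → ℝ) :=
  {x | ∀ i, x i ∈ Set.Icc (-1 + ((k i : ℝ) - 1) * (2 / n)) (-1 + (k i : ℝ) * (2 / n))}

/-- A subset of `ℝ^d` is an (affine) hyperplane. -/
def IsHyperplane (d : ℕ) (H : Set (Fin d → ℝ)) : Prop :=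
  ∃ a : Fin d → ℝ, ∃ c : ℝ, a ≠ 0 ∧ H = {x | ∑ i, a i * x i = c}

open Finset


/-- Bang-type escape point for planks in the cube `[-1,1]^d`, with ℓ¹-normalized normals. -/
theorem cube_escape {ι : Type*} [Fintype ι] {d : ℕ} (a : ι → Fin d → ℝ) (c w : ι → ℝ)
    (hw : ∀ t, 0 < w t) (ha : ∀ t, ∑ k, |a t k| = 1) (hW : ∑ t, w t < 1) :
    ∃ x : Fin d → ℝ, (∀ k, |x k| ≤ 1) ∧ ∀ t, w t < |∑ k, a t k * x k - c t| := by
  classical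
  set M : Fin d → ℝ := fun k => ∑ t, w t * |a t k| with hM
  have hM0 : ∀ k, 0 ≤ M k := fun k => sum_nonneg fun t _ => mul_nonneg (hw t).le (abs_nonneg _)
  have hMz : ∀ k, M k = 0 → ∀ t, a t k = 0 := by
    intro k hk t
    have h := (sum_eq_zero_iff_of_nonneg
      (fun t _ => mul_nonneg (hw t).le (abs_nonneg _))).1 hk t (mem_univ t)
    rcases mul_eq_zero.1 h with h' | h'
    · exact absurd h' (hw t).ne'
    · exact abs_eq_zero.1 h'
  set ρ : Fin d → ℝ := fun k => (M k)⁻¹ with hρ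
  have hρ0 : ∀ k, 0 ≤ ρ k := fun k => inv_nonneg.2 (hM0 k)
  set G : ι → ι → ℝ := fun i j => ∑ k, ρ k * (a i k * a j k) with hG
  have hGsymm : ∀ i j, G i j = G j i := fun i j => sum_congr rfl (fun k _ => by ring)
  set sg : Bool → ℝ := fun b => if b then 1 else -1 with hsg
  set Q : (ι → ℝ) → ℝ := fun μ => (∑ i, ∑ j, μ i * μ j * G i j) - 2 * ∑ i, μ i * c i with hQ
  -- expansion of the double sum splitting off index t
  have expand : ∀ (t : ι) (μ : ι → ℝ),
      (∑ i, ∑ j, μ i * μ j * G i j)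
        = μ t * μ t * G t t + μ t * (∑ j ∈ univ.erase t, μ j * G t j)
          + (∑ i ∈ univ.erase t, μ i * G i t) * μ t
          + ∑ i ∈ univ.erase t, ∑ j ∈ univ.erase t, μ i * μ j * G i j := by
    intro t μ
    have h1 : ∀ i : ι, (∑ j, μ i * μ j * G i j)
        = μ i * μ t * G i t + ∑ j ∈ univ.erase t, μ i * μ j * G i j :=
      fun i => (Finset.add_sum_erase _ _ (mem_univ t)).symm
    have hA : (∑ j ∈ univ.erase t, μ t * μ j * G t j)
        = μ t * ∑ j ∈ univ.erase t, μ j * G t j := by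
      rw [Finset.mul_sum]; exact sum_congr rfl fun j _ => by ring
    have hB : (∑ i ∈ univ.erase t, μ i * μ t * G i t)
        = (∑ i ∈ univ.erase t, μ i * G i t) * μ t := by
      rw [Finset.sum_mul]; exact sum_congr rfl fun i _ => by ring
    rw [← Finset.add_sum_erase _ (fun i => ∑ j, μ i * μ j * G i j) (mem_univ t), h1 t]
    have h2 : (∑ i ∈ univ.erase t, ∑ j, μ i * μ j * G i j)
        = ∑ i ∈ univ.erase t, (μ i * μ t * G i t + ∑ j ∈ univ.erase t, μ i * μ j * G i j) :=
      sum_congr rfl fun i _ => h1 i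
    rw [h2, Finset.sum_add_distrib, hA, hB]
    ring
  -- the key flip identity
  have key : ∀ (t : ι) (μ ν : ι → ℝ), (∀ j, j ≠ t → ν j = μ j) → ν t = -(μ t) →
      Q ν = Q μ - 4 * μ t * ((∑ j, μ j * G t j) - c t) + 4 * (μ t)^2 * G t t := by
    intro t μ ν hν hνt
    have e1 := expand t μ
    have e2 := expand t ν
    have r1 : (∑ j ∈ univ.erase t, ν j * G t j) = ∑ j ∈ univ.erase t, μ j * G t j :=
      sum_congr rfl fun j hj => by rw [hν j (Finset.ne_of_mem_erase hj)]
    have r2 : (∑ i ∈ univ.erase t, ν i * G i t) = ∑ i ∈ univ.erase t, μ i * G i t :=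
      sum_congr rfl fun i hi => by rw [hν i (Finset.ne_of_mem_erase hi)]
    have r3 : (∑ i ∈ univ.erase t, ∑ j ∈ univ.erase t, ν i * ν j * G i j)
        = ∑ i ∈ univ.erase t, ∑ j ∈ univ.erase t, μ i * μ j * G i j :=
      sum_congr rfl fun i hi => sum_congr rfl fun j hj => by
        rw [hν i (Finset.ne_of_mem_erase hi), hν j (Finset.ne_of_mem_erase hj)]
    have r4 : (∑ i, ν i * c i) = (∑ i, μ i * c i) - 2 * (μ t * c t) := by
      rw [← Finset.add_sum_erase _ (fun i => ν i * c i) (mem_univ t),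
          ← Finset.add_sum_erase _ (fun i => μ i * c i) (mem_univ t), hνt]
      have : (∑ i ∈ univ.erase t, ν i * c i) = ∑ i ∈ univ.erase t, μ i * c i :=
        sum_congr rfl fun i hi => by rw [hν i (Finset.ne_of_mem_erase hi)]
      rw [this]; ring
    have r5 : (∑ i ∈ univ.erase t, μ i * G i t) = ∑ j ∈ univ.erase t, μ j * G t j :=
      sum_congr rfl fun i _ => by rw [hGsymm i t]
    have rfull : (∑ j, μ j * G t j) = μ t * G t t + ∑ j ∈ univ.erase t, μ j * G t j :=
      (Finset.add_sum_erase _ _ (mem_univ t)).symm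
    simp only [hQ]
    rw [e1, e2, r1, r2, r3, r4, hνt, r5, rfull]
    ring
  -- choose a maximizing sign pattern
  obtain ⟨e, -, hmaxe⟩ := Finset.exists_max_image (univ : Finset (ι → Bool))
    (fun e => Q (fun j => sg (e j) * w j)) ⟨fun _ => true, mem_univ _⟩
  set lam : ι → ℝ := fun j => sg (e j) * w j with hlam
  have hlamabs : ∀ j, |lam j| = w j := by
    intro j
    by_cases hb : e j
    · simp [hlam, hsg, hb, abs_of_nonneg (hw j).le]
    · simp [hlam, hsg, hb, abs_of_nonneg (hw j).le]
  set x : Fin d → ℝ := fun k => ρ k * ∑ j, lam j * a j k with hx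
  have hSx : ∀ t, (∑ j, lam j * G t j) = ∑ k, a t k * x k := by
    intro t
    have h1 : ∀ j, lam j * G t j = ∑ k, ρ k * a t k * (lam j * a j k) := by
      intro j
      simp only [hG]
      rw [Finset.mul_sum]
      exact sum_congr rfl fun k _ => by ring
    calc (∑ j, lam j * G t j) = ∑ j, ∑ k, ρ k * a t k * (lam j * a j k) :=
          sum_congr rfl fun j _ => h1 j
      _ = ∑ k, ∑ j, ρ k * a t k * (lam j * a j k) := Finset.sum_comm
      _ = ∑ k, a t k * x k := by
          refine sum_congr rfl fun k _ => ?_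
          simp only [hx]
          rw [← Finset.mul_sum, Finset.mul_sum, Finset.mul_sum]
          rw [Finset.mul_sum]
          exact sum_congr rfl fun j _ => by ring
  refine ⟨x, ?_, ?_⟩
  · intro k
    by_cases h : M k = 0
    · have hxk : x k = 0 := by simp [hx, hρ, h]
      simp [hxk]
    · have habs : |∑ j, lam j * a j k| ≤ M k := by
        calc |∑ j, lam j * a j k| ≤ ∑ j, |lam j * a j k| := Finset.abs_sum_le_sum_abs _ _
          _ = ∑ j, w j * |a j k| := sum_congr rfl fun j _ => by
              rw [abs_mul, hlamabs j]
          _ = M k := rfl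
      have hxk : x k = ρ k * ∑ j, lam j * a j k := by simp only [hx]
      calc |x k| = ρ k * |∑ j, lam j * a j k| := by
            rw [hxk, abs_mul, abs_of_nonneg (hρ0 k)]
        _ ≤ ρ k * M k := mul_le_mul_of_nonneg_left habs (hρ0 k)
        _ = 1 := inv_mul_cancel₀ h
  · intro t
    have hWpos : 0 < ∑ s, w s := Finset.sum_pos (fun s _ => hw s) ⟨t, mem_univ t⟩
    -- Cauchy-Schwarz: 1 ≤ G t t * W
    have hGnn : 0 ≤ G t t := by
      simp only [hG]
      exact sum_nonneg fun k _ => mul_nonneg (hρ0 k) (mul_self_nonneg _)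
    have hCS : 1 ≤ G t t * ∑ s, w s := by
      set S : Finset (Fin d) := univ.filter (fun k => M k ≠ 0) with hS
      have h1 : (∑ k ∈ S, |a t k|) = 1 := by
        rw [← ha t]
        apply Finset.sum_filter_of_ne
        intro k _ hk hMk
        exact hk (abs_eq_zero.2 (hMz k hMk t))
      have h2 : (∑ k ∈ S, ρ k * (a t k * a t k)) = G t t := by
        simp only [hG]
        apply Finset.sum_filter_of_ne
        intro k _ hk hMk
        exact hk (by simp [hρ, hMk])
      have h3 : (∑ k ∈ S, M k) ≤ ∑ s, w s := by
        calc (∑ k ∈ S, M k) ≤ ∑ k, M k :=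
              Finset.sum_le_sum_of_subset_of_nonneg (filter_subset _ _)
                (fun k _ _ => hM0 k)
          _ = ∑ s, w s := by
              simp only [hM]
              rw [Finset.sum_comm]
              exact sum_congr rfl fun s _ => by rw [← Finset.mul_sum, ha s, mul_one]
      have hcs := Finset.sum_sq_le_sum_mul_sum_of_sq_eq_mul S
        (f := fun k => ρ k * (a t k * a t k)) (g := fun k => M k) (r := fun k => |a t k|)
        (fun k _ => mul_nonneg (hρ0 k) (mul_self_nonneg _))
        (fun k _ => hM0 k)
        (fun k hk => by
          have hMk : M k ≠ 0 := (Finset.mem_filter.1 hk).2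
          have hinv : ρ k * M k = 1 := inv_mul_cancel₀ hMk
          calc |a t k| ^ 2 = (a t k * a t k) * (ρ k * M k) := by
                rw [hinv, mul_one, sq_abs, sq]
            _ = ρ k * (a t k * a t k) * M k := by ring)
      rw [h1, one_pow, h2] at hcs
      calc (1:ℝ) ≤ G t t * ∑ k ∈ S, M k := hcs
        _ ≤ G t t * ∑ s, w s := mul_le_mul_of_nonneg_left h3 hGnn
    have hGtt1 : 1 < G t t := by nlinarith
    -- flip argument at the maximizer
    have hflip : w t * w t * G t t ≤ lam t * ((∑ j, lam j * G t j) - c t) := by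
      set e' : ι → Bool := Function.update e t (!(e t)) with he'
      set lam' : ι → ℝ := fun j => sg (e' j) * w j with hlam2
      have hj' : ∀ j, j ≠ t → lam' j = lam j := by
        intro j hj
        show sg (Function.update e t (!(e t)) j) * w j = lam j
        rw [Function.update_of_ne hj]
      have ht' : lam' t = -(lam t) := by
        show sg (Function.update e t (!(e t)) t) * w t = -(sg (e t) * w t)
        rw [Function.update_self]
        by_cases hb : e t <;> simp [hsg, hb]
      have hle : Q lam' ≤ Q lam := hmaxe e' (mem_univ _)
      have hkey := key t lam lam' hj' ht'
      have h4 : (lam t)^2 * G t t ≤ lam t * ((∑ j, lam j * G t j) - c t) := by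
        rw [hkey] at hle
        linarith
      have hlt2 : (lam t)^2 = w t * w t := by
        calc (lam t)^2 = |lam t|^2 := (sq_abs _).symm
          _ = w t * w t := by rw [hlamabs t, sq]
      rw [hlt2] at h4
      exact h4
    have habs2 : w t * (w t * G t t) ≤ w t * |(∑ j, lam j * G t j) - c t| := by
      calc w t * (w t * G t t) = w t * w t * G t t := by ring
        _ ≤ lam t * ((∑ j, lam j * G t j) - c t) := hflip
        _ ≤ |lam t * ((∑ j, lam j * G t j) - c t)| := le_abs_self _
        _ = w t * |(∑ j, lam j * G t j) - c t| := by rw [abs_mul, hlamabs t]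
    have hfin : w t * G t t ≤ |(∑ j, lam j * G t j) - c t| :=
      le_of_mul_le_mul_left habs2 (hw t)
    rw [hSx t] at hfin
    calc w t = w t * 1 := (mul_one _).symm
      _ < w t * G t t := mul_lt_mul_of_pos_left hGtt1 (hw t)
      _ ≤ |∑ k, a t k * x k - c t| := hfin

/-- The minimum number of hyperplanes hitting every cell of `Q_n^d` is `⌈n/2⌉`. -/
theorem hitting_eq_dim (d n : ℕ) (hd : 1 ≤ d) (hn : 1 ≤ n) :
    IsLeast {m : ℕ | ∃ F : Finset (Set (Fin d → ℝ)), F.card = m ∧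
      (∀ H ∈ F, IsHyperplane d H) ∧
      ∀ k : Fin d → ℕ, (∀ i, k i ∈ Finset.Icc 1 n) →
        ∃ H ∈ F, (H ∩ cellD d n k).Nonempty} ((n + 1) / 2) := by
  have hn0 : (0:ℝ) < n := by exact_mod_cast hn
  have h2n : (0:ℝ) < 2 / n := by positivity
  constructor
  · -- membership: ⌈n/2⌉ parallel hyperplanes orthogonal to the first axis suffice
    set i0 : Fin d := ⟨0, hd⟩ with hi0
    set ee : Fin d → ℝ := fun i => if i = i0 then 1 else 0 with hee
    set v : ℕ → ℝ := fun j => -1 + (2*(j:ℝ) - 1) * (2/n) with hv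
    set Hp : ℕ → Set (Fin d → ℝ) := fun j => {x | ∑ i, ee i * x i = v j} with hHp
    have hsum : ∀ x : Fin d → ℝ, (∑ i, ee i * x i) = x i0 := by
      intro x
      rw [Finset.sum_eq_single i0]
      · simp [hee]
      · intro b _ hb; simp [hee, hb]
      · intro h; exact absurd (Finset.mem_univ i0) h
    have hvinj : ∀ j j' : ℕ, v j = v j' → j = j' := by
      intro j j' hjj
      have h1 : (2*(j:ℝ) - 1) * (2/n) = (2*(j':ℝ) - 1) * (2/n) := by
        simp only [hv] at hjj; linarith
      have h2 : (j:ℝ) = (j':ℝ) := by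
        have := mul_right_cancel₀ (ne_of_gt h2n) h1
        linarith
      exact_mod_cast h2
    refine ⟨(Finset.Icc 1 ((n+1)/2)).image Hp, ?_, ?_, ?_⟩
    · rw [Finset.card_image_of_injOn, Nat.card_Icc]
      · omega
      · intro j hj j' hj' hEq
        have hmem : (fun _ : Fin d => v j) ∈ Hp j := by
          show (∑ i, ee i * (fun _ : Fin d => v j) i) = v j
          rw [hsum]
        rw [hEq] at hmem
        exact hvinj j j' (by rw [← hsum (fun _ : Fin d => v j)]; exact hmem)
    · intro H hH
      rw [Finset.mem_image] at hH
      obtain ⟨j, _, rfl⟩ := hH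
      refine ⟨ee, v j, ?_, rfl⟩
      intro h0
      have := congrFun h0 i0
      simp [hee] at this
    · intro k hk
      have hk0 := Finset.mem_Icc.1 (hk i0)
      set j := (k i0 + 1) / 2 with hjdef
      have hjmem : j ∈ Finset.Icc 1 ((n+1)/2) := Finset.mem_Icc.2 (by omega)
      refine ⟨Hp j, Finset.mem_image_of_mem _ hjmem, ?_⟩
      set z : Fin d → ℝ := fun i => if i = i0 then v j else -1 + ((k i : ℝ) - 1) * (2/n) with hz
      have hzi0 : z i0 = v j := by simp [hz]
      refine ⟨z, ?_, ?_⟩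
      · show (∑ i, ee i * z i) = v j
        rw [hsum, hzi0]
      · -- z belongs to the cell
        intro i
        by_cases hi : i = i0
        · subst hi
          rw [hzi0]
          have hcast : (k i0 : ℝ) = 2*(j:ℝ) ∨ (k i0 : ℝ) = 2*(j:ℝ) - 1 := by
            rcases Nat.even_or_odd (k i0) with he | ho
            · left
              obtain ⟨r, hr⟩ := he
              have hkj : k i0 = 2 * j := by omega
              rw [hkj]; push_cast; ring
            · right
              obtain ⟨r, hr⟩ := ho
              have hkj : k i0 + 1 = 2 * j := by omega
              have hc : ((k i0 : ℝ)) + 1 = 2*(j:ℝ) := by exact_mod_cast congrArg (fun t : ℕ => (t:ℝ)) hkj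
              linarith
          have hvj : v j = -1 + (2*(j:ℝ) - 1) * (2/n) := rfl
          rcases hcast with hc | hc <;>
            (refine ⟨?_, ?_⟩ <;> (rw [hvj, hc] <;> nlinarith [h2n.le]))
        · have hzi : z i = -1 + ((k i : ℝ) - 1) * (2/n) := by simp [hz, hi]
          rw [hzi]
          exact ⟨le_refl _, by nlinarith⟩
  · -- lower bound via the plank argument
    rintro m ⟨F, hcard, hplane, hhits⟩
    by_contra hlt
    push_neg at hlt
    have h2m : 2 * m < n := by omega
    choose a0 c0 hprop using fun H : {H // H ∈ F} => hplane H.1 H.2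
    have ha0 : ∀ H, a0 H ≠ 0 := fun H => (hprop H).1
    have hHset : ∀ H : {H // H ∈ F}, (H : Set (Fin d → ℝ)) = {x | ∑ i, a0 H i * x i = c0 H} :=
      fun H => (hprop H).2
    set N : {H // H ∈ F} → ℝ := fun H => ∑ i, |a0 H i| with hNdef
    have hN : ∀ H, 0 < N H := by
      intro H
      have hex : ∃ i, a0 H i ≠ 0 := by
        by_contra hno; push_neg at hno; exact ha0 H (funext hno)
      obtain ⟨i, hi⟩ := hex
      exact Finset.sum_pos' (fun i _ => abs_nonneg _) ⟨i, Finset.mem_univ i, abs_pos.2 hi⟩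
    have hsum1 : ∀ H, (∑ i, |a0 H i / N H|) = 1 := by
      intro H
      have h1 : ∀ i, |a0 H i / N H| = |a0 H i| / N H := fun i => by
        rw [abs_div, abs_of_pos (hN H)]
      rw [Finset.sum_congr rfl fun i _ => h1 i, ← Finset.sum_div, div_self (hN H).ne']
    have hWlt : (∑ _H : {H // H ∈ F}, (2/(n:ℝ))) < 1 := by
      have hc : (∑ _H : {H // H ∈ F}, (2/(n:ℝ))) = (m : ℝ) * (2/n) := by
        have hcu : (Finset.univ : Finset {H // H ∈ F}).card = m := by
          rw [Finset.card_univ, Fintype.card_coe, hcard]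
        rw [Finset.sum_const, hcu, nsmul_eq_mul]
      rw [hc]
      have hid : (m : ℝ) * (2/n) = (2*m)/n := by ring
      rw [hid, div_lt_one hn0]
      exact_mod_cast h2m
    obtain ⟨x, hx1, hx2⟩ := cube_escape (fun H i => a0 H i / N H) (fun H => c0 H / N H)
      (fun _ => 2/(n:ℝ)) (fun _ => h2n) hsum1 hWlt
    -- the cell containing x
    set k : Fin d → ℕ := fun i => max 1 (Nat.ceil ((x i + 1) * n / 2)) with hkdef
    have hxb : ∀ i, -1 ≤ x i ∧ x i ≤ 1 := fun i => abs_le.1 (hx1 i)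
    have hy0 : ∀ i, 0 ≤ (x i + 1) * n / 2 := by
      intro i; have := (hxb i).1; nlinarith
    have hkmem : ∀ i, k i ∈ Finset.Icc 1 n := by
      intro i
      rw [Finset.mem_Icc]
      refine ⟨le_max_left _ _, ?_⟩
      have hy : (x i + 1) * n / 2 ≤ (n:ℝ) := by
        have := (hxb i).2; nlinarith
      have hceil : Nat.ceil ((x i + 1) * n / 2) ≤ n := Nat.ceil_le.2 (by exact_mod_cast hy)
      exact max_le hn hceil
    have hyid : ∀ i, ((x i + 1) * n / 2) * (2/n) = x i + 1 := by
      intro i; field_simp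
    have hcell : x ∈ cellD d n k := by
      intro i
      constructor
      · -- lower bound of the cell
        rcases le_or_gt (Nat.ceil ((x i + 1) * n / 2)) 1 with hC | hC
        · have hk1 : k i = 1 := by
            simp only [hkdef]; omega
          rw [hk1]
          push_cast
          have := (hxb i).1
          nlinarith
        · have hk2 : k i = Nat.ceil ((x i + 1) * n / 2) := by
            simp only [hkdef]; omega
          have hlt1 : ((Nat.ceil ((x i + 1) * n / 2) : ℝ)) < (x i + 1) * n / 2 + 1 :=
            Nat.ceil_lt_add_one (hy0 i)
          have hmul : ((k i : ℝ) - 1) * (2/n) ≤ ((x i + 1) * n / 2) * (2/n) := by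
            apply mul_le_mul_of_nonneg_right _ h2n.le
            rw [hk2]; linarith
          rw [hyid i] at hmul
          linarith
      · -- upper bound of the cell
        have hle : (x i + 1) * n / 2 ≤ (k i : ℝ) := by
          calc (x i + 1) * n / 2 ≤ (Nat.ceil ((x i + 1) * n / 2) : ℝ) := Nat.le_ceil _
            _ ≤ (k i : ℝ) := by exact_mod_cast le_max_right 1 _
        have hmul : ((x i + 1) * n / 2) * (2/n) ≤ (k i : ℝ) * (2/n) :=
          mul_le_mul_of_nonneg_right hle h2n.le
        rw [hyid i] at hmul
        linarith
    obtain ⟨H, hHF, hneq⟩ := hhits k hkmem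
    obtain ⟨z, hzH, hzcell⟩ := hneq
    set H' : {H // H ∈ F} := ⟨H, hHF⟩ with hH'
    have hzH' : (∑ i, a0 H' i * z i) = c0 H' := by
      have hs := hHset H'
      simp only [hH'] at hs
      rw [hs] at hzH
      exact hzH
    have hxz : ∀ i, |x i - z i| ≤ 2/n := by
      intro i
      obtain ⟨hz1, hz2⟩ := hzcell i
      obtain ⟨hx1', hx2'⟩ := hcell i
      rw [abs_sub_le_iff]
      constructor <;> linarith
    have hcc : c0 H' / N H' = ∑ i, (a0 H' i / N H') * z i := by
      rw [← hzH', Finset.sum_div]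
      exact Finset.sum_congr rfl fun i _ => by ring
    have hbound : |(∑ i, (a0 H' i / N H') * x i) - c0 H' / N H'| ≤ 2/n := by
      rw [hcc, ← Finset.sum_sub_distrib]
      have hterm : ∀ i, (a0 H' i / N H') * x i - (a0 H' i / N H') * z i
          = (a0 H' i / N H') * (x i - z i) := fun i => by ring
      calc |∑ i, ((a0 H' i / N H') * x i - (a0 H' i / N H') * z i)|
          ≤ ∑ i, |(a0 H' i / N H') * x i - (a0 H' i / N H') * z i| :=
            Finset.abs_sum_le_sum_abs _ _
        _ ≤ ∑ i, |a0 H' i / N H'| * (2/n) := by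
            apply Finset.sum_le_sum
            intro i _
            rw [hterm i, abs_mul]
            exact mul_le_mul_of_nonneg_left (hxz i) (abs_nonneg _)
        _ = (∑ i, |a0 H' i / N H'|) * (2/n) := by rw [Finset.sum_mul]
        _ = 2/n := by rw [hsum1 H', one_mul]
    exact absurd hbound (not_le.2 (hx2 H'))
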